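/- If α = β for equivalent irrational numbers, the Diophantine constant is preserved: for irrational α and β with α ∼ β one has 𝔨(α) = 𝔨(β). -/

import Mathlib

open Filter

/-- The tails `αₙ = [aₙ; aₙ₊₁, …]` of the continued fraction of `α`. -/
noncomputable def cfTail (α : ℝ) : ℕ → ℝ
  | 0 => α
  | n + 1 => (Int.fract (cfTail α n))⁻¹

/-- The partial quotients `aₙ` of the continued fraction of `α`. -/
noncomputable def cfDigit (α : ℝ) (n : ℕ) : ℤ := ⌊cfTail α n⌋

/-- Value `[a; b, c, …]` of a finite continued fraction given by a list. -/
noncomputable def finCF : List ℤ → ℝ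
  | [] => 0
  | a :: l => (a : ℝ) + (finCF l)⁻¹

/-- `α*ₙ = [0; aₙ, aₙ₋₁, …, a₁]`. -/
noncomputable def cfStar (α : ℝ) (n : ℕ) : ℝ :=
  (finCF (((List.range' 1 n).reverse).map (cfDigit α)))⁻¹

/-- Numerators `pₙ` of the convergents of `α`. -/
noncomputable def cfNum (α : ℝ) : ℕ → ℤ
  | 0 => cfDigit α 0
  | 1 => cfDigit α 1 * cfDigit α 0 + 1
  | n + 2 => cfDigit α (n + 2) * cfNum α (n + 1) + cfNum α n

/-- Denominators `qₙ` of the convergents of `α`. -/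
noncomputable def cfDen (α : ℝ) : ℕ → ℤ
  | 0 => 1
  | 1 => cfDigit α 1
  | n + 2 => cfDigit α (n + 2) * cfDen α (n + 1) + cfDen α n

/-- The irrationality measure function `ψ_α^[2]` for "second best" approximations. -/
noncomputable def psi2 (α : ℝ) (t : ℝ) : ℝ :=
  sInf { x : ℝ | ∃ p q : ℤ, 1 ≤ q ∧ (q : ℝ) ≤ t ∧
    (∀ n : ℕ, (p, q) ≠ (cfNum α n, cfDen α n)) ∧ x = |(q : ℝ) * α - (p : ℝ)| }

/-- The Diophantine constant `𝔨(α) = liminf_{t → ∞} t · ψ_α^[2](t)`. -/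
noncomputable def kConst (α : ℝ) : ℝ := liminf (fun t : ℝ => t * psi2 α t) atTop

/-- Two numbers are equivalent if the tails of their continued fraction expansions
coincide: `a_{n+k} = b_{m+k}` for all `k ≥ 1`, for some positive integers `m`, `n`. -/
def CFEquiv (α β : ℝ) : Prop :=
  ∃ n m : ℕ, 0 < n ∧ 0 < m ∧ ∀ k : ℕ, 0 < k → cfDigit α (n + k) = cfDigit β (m + k)

/-- The spectrum `𝕃₂` of values of `𝔨`. -/
def L2 : Set ℝ := { l : ℝ | ∃ α : ℝ, Irrational α ∧ l = kConst α }

/-- `κ¹ₙ(α) = (1 + α*ₙ₋₁)(αₙ − 1)/(αₙ + α*ₙ₋₁)`. -/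
noncomputable def kappa1 (α : ℝ) (n : ℕ) : ℝ :=
  (1 + cfStar α (n - 1)) * (cfTail α n - 1) / (cfTail α n + cfStar α (n - 1))

/-- `κ²ₙ(α) = (1 − α*ₙ)(αₙ₊₁ + 1)/(αₙ₊₁ + α*ₙ)`. -/
noncomputable def kappa2 (α : ℝ) (n : ℕ) : ℝ :=
  (1 - cfStar α n) * (cfTail α (n + 1) + 1) / (cfTail α (n + 1) + cfStar α n)

/-- `κ⁴ₙ(α) = 4/(αₙ + α*ₙ₋₁)`. -/
noncomputable def kappa4 (α : ℝ) (n : ℕ) : ℝ :=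
  4 / (cfTail α n + cfStar α (n - 1))

/-!
Let `τ = αₙ₊₂ = βₘ₊₂` be the common tail. The unimodular map
`(P, Q) ↦ P (pₙ₊₁, qₙ₊₁) + Q (pₙ, qₙ)` sends the convergents of `τ` onto the convergents of `α`
of index `≥ n + 2`, and multiplies the error `|Q τ - P|` by `1 / (qₙ₊₁ τ + qₙ)`. Composing the
map for `β` with the inverse of the one for `α` turns an approximation `(p, q)` of `β` with small
error into one of `α` with error `κ |q β - p|` and denominator at most `q / κ + c`, where
`κ = (Qₘ₊₁ τ + Qₘ) / (qₙ₊₁ τ + qₙ)`. Non-convergents go to non-convergents: the finitely many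
convergents of `α` that are not images of convergents of `τ` have errors bounded below. Hence
`ψ_α^[2](t / κ + c) ≤ κ ψ_β^[2](t)` for large `t`, so `𝔨(α) ≤ 𝔨(β)`, and equality by symmetry.
-/

open Topology

section ContinuedFraction

variable {α : ℝ}

lemma irrational_cfTail (hα : Irrational α) : ∀ n, Irrational (cfTail α n)
  | 0 => hα
  | n + 1 => ((irrational_cfTail hα n).sub_intCast ⌊cfTail α n⌋).inv

lemma fract_cfTail_pos (hα : Irrational α) (n : ℕ) : 0 < Int.fract (cfTail α n) :=
  (Int.fract_nonneg _).lt_of_ne fun h =>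
    (irrational_cfTail hα n).ne_int ⌊cfTail α n⌋ (by linarith [Int.floor_add_fract (cfTail α n)])

lemma one_lt_cfTail_succ (hα : Irrational α) (n : ℕ) : 1 < cfTail α (n + 1) :=
  (one_lt_inv₀ (fract_cfTail_pos hα n)).mpr (Int.fract_lt_one _)

lemma one_le_cfDigit_succ (hα : Irrational α) (n : ℕ) : 1 ≤ cfDigit α (n + 1) :=
  Int.le_floor.mpr (by exact_mod_cast (one_lt_cfTail_succ hα n).le)

lemma cfTail_sub_cfDigit_mul (hα : Irrational α) (n : ℕ) :
    (cfTail α n - cfDigit α n) * cfTail α (n + 1) = 1 := by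
  rw [cfDigit, Int.self_sub_floor]
  exact mul_inv_cancel₀ (fract_cfTail_pos hα n).ne'

lemma cfTail_cfTail (j : ℕ) : ∀ k, cfTail (cfTail α j) k = cfTail α (j + k)
  | 0 => rfl
  | k + 1 => congrArg (fun x => (Int.fract x)⁻¹) (cfTail_cfTail j k)

lemma cfDigit_cfTail (j k : ℕ) : cfDigit (cfTail α j) k = cfDigit α (j + k) := by
  rw [cfDigit, cfTail_cfTail, cfDigit]

end ContinuedFraction

noncomputable def cfConv (α : ℝ) (n : ℕ) : ℤ × ℤ := (cfNum α n, cfDen α n)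

section Convergents

variable {α : ℝ}

lemma cfConv_add_two (n : ℕ) :
    cfConv α (n + 2) = cfDigit α (n + 2) • cfConv α (n + 1) + cfConv α n := by
  ext <;> simp [cfConv, cfNum, cfDen]

lemma cfConv_congr {β : ℝ} (h : ∀ k, cfDigit α k = cfDigit β k) (n : ℕ) :
    cfConv α n = cfConv β n := by
  induction n using Nat.twoStepInduction with
  | zero => simp [cfConv, cfNum, cfDen, h]
  | one => simp [cfConv, cfNum, cfDen, h]
  | more n ih₀ ih₁ => rw [cfConv_add_two, cfConv_add_two, ih₀, ih₁, h]

lemma cfNum_mul_cfDen_sub (n : ℕ) :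
    cfNum α (n + 1) * cfDen α n - cfNum α n * cfDen α (n + 1) = (-1) ^ n := by
  induction n with
  | zero => simp [cfNum, cfDen]; ring
  | succ n ih =>
    simp only [cfNum, cfDen, pow_succ]
    linear_combination -ih

lemma isCoprime_cfNum_cfDen : ∀ n, IsCoprime (cfNum α n) (cfDen α n)
  | 0 => isCoprime_one_right
  | n + 1 => by
    have hdet := cfNum_mul_cfDen_sub (α := α) n
    rcases neg_one_pow_eq_or ℤ n with h | h <;> rw [h] at hdet
    · exact ⟨cfDen α n, -cfNum α n, by linear_combination hdet⟩
    · exact ⟨-cfDen α n, cfNum α n, by linear_combination -hdet⟩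

lemma two_smul_cfConv_ne (k n : ℕ) : 2 • cfConv α k ≠ cfConv α n := by
  intro h
  have h2 : IsUnit (2 : ℤ) := (isCoprime_cfNum_cfDen n).isUnit_of_dvd'
    ⟨_, (congrArg Prod.fst h).symm⟩ ⟨_, (congrArg Prod.snd h).symm⟩
  norm_num [Int.isUnit_iff] at h2

variable (hα : Irrational α)
include hα

lemma one_le_cfDen (n : ℕ) : 1 ≤ cfDen α n := by
  induction n using Nat.twoStepInduction with
  | zero => simp [cfDen]
  | one => simpa [cfDen] using one_le_cfDigit_succ hα 0
  | more n _ ih =>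
    simp only [cfDen]
    nlinarith [one_le_cfDigit_succ hα (n + 1), one_le_cfDen n]

lemma one_le_cast_cfDen (n : ℕ) : (1 : ℝ) ≤ cfDen α n := by
  exact_mod_cast one_le_cfDen hα n

lemma le_cfDen (n : ℕ) : (n : ℤ) ≤ cfDen α n := by
  induction n using Nat.twoStepInduction with
  | zero => simp [cfDen]
  | one => simpa [cfDen] using one_le_cfDigit_succ hα 0
  | more n ih _ =>
    simp only [cfDen]
    push_cast at *
    nlinarith [one_le_cfDigit_succ hα (n + 1), one_le_cfDen hα n]

lemma cfDen_le_cfDen_succ : ∀ n, cfDen α n ≤ cfDen α (n + 1)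
  | 0 => one_le_cfDigit_succ hα 0
  | n + 1 => by
    simp only [cfDen]
    nlinarith [one_le_cfDigit_succ hα (n + 1), one_le_cfDen hα n, one_le_cfDen hα (n + 1)]

end Convergents

def approxErr (x : ℝ) (v : ℤ × ℤ) : ℝ := |v.2 * x - v.1|

lemma approxErr_zsmul (x : ℝ) (s : ℤ) (v : ℤ × ℤ) :
    approxErr x (s • v) = |(s : ℝ)| * approxErr x v := by
  simp only [approxErr, Prod.smul_fst, Prod.smul_snd, smul_eq_mul, Int.cast_mul, ← abs_mul]
  ring_nf

lemma approxErr_sign_smul {x : ℝ} {v : ℤ × ℤ} (hv : v.2 ≠ 0) :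
    approxErr x (v.2.sign • v) = approxErr x v := by
  rw [approxErr_zsmul, ← Int.cast_abs, Int.abs_sign_of_ne_zero hv, Int.cast_one, one_mul]

lemma snd_ne_zero_of_approxErr_lt_one {x : ℝ} {v : ℤ × ℤ} (hv : v ≠ 0)
    (h : approxErr x v < 1) : v.2 ≠ 0 := by
  intro h₀
  have h₁ : v.1 ≠ 0 := fun h₁ => hv (Prod.ext h₁ h₀)
  have : (1 : ℝ) ≤ approxErr x v := by
    simp only [approxErr, h₀, Int.cast_zero, zero_mul, zero_sub, abs_neg]
    exact_mod_cast Int.one_le_abs h₁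
  linarith

/-- Denominator of `α = (pₙ₊₁ αₙ₊₂ + pₙ) / (qₙ₊₁ αₙ₊₂ + qₙ)`. -/
noncomputable def cfMobiusDen (α : ℝ) (n : ℕ) : ℝ :=
  cfDen α (n + 1) * cfTail α (n + 2) + cfDen α n

/-- Reads `(P, Q)` as an approximation of the tail `αₙ₊₂` and returns the corresponding
approximation of `α`. -/
noncomputable def fromTail (α : ℝ) (n : ℕ) : ℤ × ℤ →ₗ[ℤ] ℤ × ℤ :=
  (LinearMap.fst ℤ ℤ ℤ).smulRight (cfConv α (n + 1)) +
    (LinearMap.snd ℤ ℤ ℤ).smulRight (cfConv α n)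

section Mobius

variable {α : ℝ} {n : ℕ}

lemma fromTail_apply (w : ℤ × ℤ) :
    fromTail α n w = w.1 • cfConv α (n + 1) + w.2 • cfConv α n :=
  rfl

lemma fromTail_snd (w : ℤ × ℤ) :
    ((fromTail α n w).2 : ℝ) =
      w.2 * cfMobiusDen α n - cfDen α (n + 1) * (w.2 * cfTail α (n + 2) - w.1) := by
  simp only [fromTail_apply, cfConv, cfMobiusDen, Prod.snd_add, Prod.smul_snd, smul_eq_mul]
  push_cast
  ring

lemma fromTail_bijective : Function.Bijective (fromTail α n) := by
  set σ := (-1 : ℤ) ^ n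
  have hdet : cfNum α (n + 1) * cfDen α n - cfNum α n * cfDen α (n + 1) = σ :=
    cfNum_mul_cfDen_sub n
  have hσ : σ * σ = 1 := by rw [← pow_add, ← two_mul, pow_mul]; norm_num
  refine Function.bijective_iff_has_inverse.mpr
    ⟨fun v => σ • (v.1 * cfDen α n - v.2 * cfNum α n,
      v.2 * cfNum α (n + 1) - v.1 * cfDen α (n + 1)), fun w => ?_, fun v => ?_⟩ <;>
  simp only [fromTail_apply, cfConv, Prod.ext_iff, Prod.fst_add, Prod.snd_add, Prod.smul_fst,
    Prod.smul_snd, smul_eq_mul]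
  · exact ⟨by linear_combination (σ * w.1) * hdet + w.1 * hσ,
      by linear_combination (σ * w.2) * hdet + w.2 * hσ⟩
  · exact ⟨by linear_combination (σ * v.1) * hdet + v.1 * hσ,
      by linear_combination (σ * v.2) * hdet + v.2 * hσ⟩

lemma fromTail_cfConv (j : ℕ) :
    fromTail α n (cfConv (cfTail α (n + 2)) j) = cfConv α (n + 2 + j) := by
  induction j using Nat.twoStepInduction with
  | zero =>
    rw [cfConv_add_two, fromTail_apply]
    simp [cfConv, cfNum, cfDen, cfDigit_cfTail]
  | one =>
    rw [show n + 2 + 1 = n + 1 + 2 by ring, cfConv_add_two, cfConv_add_two, fromTail_apply]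
    simp only [cfConv, cfNum, cfDen, cfDigit_cfTail]
    ext <;> simp <;> ring
  | more j ih₀ ih₁ =>
    rw [cfConv_add_two, map_add, map_zsmul, ih₀, ih₁, cfDigit_cfTail,
      show n + 2 + (j + 2) = n + 2 + j + 2 by ring, cfConv_add_two]
    rfl

variable (hα : Irrational α)
include hα

lemma mul_cfMobiusDen :
    ∀ n, α * cfMobiusDen α n = cfNum α (n + 1) * cfTail α (n + 2) + cfNum α n
  | 0 => by
    have h₀ : (α - cfDigit α 0) * cfTail α 1 = 1 := cfTail_sub_cfDigit_mul hα 0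
    simp only [cfMobiusDen, cfNum, cfDen]
    push_cast
    linear_combination cfTail α 2 * h₀ - (α - cfDigit α 0) * cfTail_sub_cfDigit_mul hα 1
  | n + 1 => by
    have ih := mul_cfMobiusDen n
    simp only [cfMobiusDen, cfNum, cfDen] at ih ⊢
    push_cast
    linear_combination cfTail α (n + 3) * ih -
      (α * cfDen α (n + 1) - cfNum α (n + 1)) * cfTail_sub_cfDigit_mul hα (n + 2)

lemma cfMobiusDen_pos (n : ℕ) : 0 < cfMobiusDen α n := by
  have := one_le_cast_cfDen hα n
  have := one_le_cast_cfDen hα (n + 1)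
  have := one_lt_cfTail_succ hα (n + 1)
  unfold cfMobiusDen
  positivity

lemma sub_mul_cfMobiusDen (w : ℤ × ℤ) :
    ((fromTail α n w).2 * α - (fromTail α n w).1) * cfMobiusDen α n =
      (-1) ^ n * (w.2 * cfTail α (n + 2) - w.1) := by
  have hdet : (cfNum α (n + 1) * cfDen α n - cfNum α n * cfDen α (n + 1) : ℝ) = (-1) ^ n := by
    exact_mod_cast cfNum_mul_cfDen_sub n
  have hα' := mul_cfMobiusDen hα n
  simp only [fromTail_apply, cfConv, Prod.snd_add, Prod.fst_add, Prod.smul_fst, Prod.smul_snd,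
    smul_eq_mul, cfMobiusDen] at hα' ⊢
  push_cast
  linear_combination (w.1 * cfDen α (n + 1) + w.2 * cfDen α n) * hα' +
    (w.2 * cfTail α (n + 2) - w.1) * hdet

lemma approxErr_fromTail_mul (w : ℤ × ℤ) :
    approxErr α (fromTail α n w) * cfMobiusDen α n = approxErr (cfTail α (n + 2)) w := by
  rw [approxErr, approxErr, ← abs_of_pos (cfMobiusDen_pos hα n), ← abs_mul,
    sub_mul_cfMobiusDen hα, abs_mul, abs_neg_one_pow, one_mul]

lemma approxErr_cfConv_mul : approxErr α (cfConv α n) * cfMobiusDen α n = cfTail α (n + 2) := by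
  have h := approxErr_fromTail_mul hα (n := n) (0, 1)
  rw [fromTail_apply] at h
  simpa [approxErr, abs_of_pos (zero_lt_one.trans (one_lt_cfTail_succ hα (n + 1)))] using h

lemma approxErr_cfConv_pos : 0 < approxErr α (cfConv α n) :=
  (mul_pos_iff_of_pos_right (cfMobiusDen_pos hα n)).mp <|
    approxErr_cfConv_mul hα ▸ zero_lt_one.trans (one_lt_cfTail_succ hα (n + 1))

lemma approxErr_cfConv_le : approxErr α (cfConv α n) ≤ (cfDen α (n + 1) : ℝ)⁻¹ := by
  have h := approxErr_cfConv_mul hα (n := n)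
  have := one_le_cast_cfDen hα n
  have := one_le_cast_cfDen hα (n + 1)
  have := one_lt_cfTail_succ hα (n + 1)
  rw [← eq_div_iff (cfMobiusDen_pos hα n).ne', cfMobiusDen] at h
  rw [h, div_le_iff₀ (by positivity)]
  field_simp
  linarith

lemma approxErr_cfConv_le_inv_succ : approxErr α (cfConv α n) ≤ ((n : ℝ) + 1)⁻¹ :=
  (approxErr_cfConv_le hα).trans <|
    inv_anti₀ (by positivity) (by exact_mod_cast le_cfDen hα (n + 1))

end Mobius

lemma eq_of_cfDigit_eq {α β : ℝ} (hα : Irrational α) (hβ : Irrational β)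
    (h : ∀ k, cfDigit α k = cfDigit β k) : α = β := by
  have hle (k : ℕ) : |α - β| ≤ 2 / ((k + 1 : ℕ) : ℝ) := by
    set v := cfConv β k
    have hq : (1 : ℝ) ≤ v.2 := one_le_cast_cfDen hβ k
    have hα' : approxErr α v ≤ ((k : ℝ) + 1)⁻¹ := by
      simpa only [cfConv_congr h k] using approxErr_cfConv_le_inv_succ hα (n := k)
    have hβ' : approxErr β v ≤ ((k : ℝ) + 1)⁻¹ := approxErr_cfConv_le_inv_succ hβ
    calc |α - β| ≤ v.2 * |α - β| := le_mul_of_one_le_left (abs_nonneg _) hq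
      _ = |(v.2 * α - v.1) - (v.2 * β - v.1)| := by
        rw [sub_sub_sub_cancel_right, ← mul_sub, abs_mul, abs_of_pos (zero_lt_one.trans_le hq)]
      _ ≤ approxErr α v + approxErr β v := abs_sub _ _
      _ ≤ 2 / ((k + 1 : ℕ) : ℝ) := by rw [div_eq_mul_inv]; push_cast; linarith
  have h₀ := ge_of_tendsto'
    ((tendsto_const_div_atTop_nhds_zero_nat 2).comp (tendsto_add_atTop_nat 1)) hle
  exact sub_eq_zero.mp (abs_nonpos_iff.mp h₀)

lemma cfTail_eq_of_cfDigit_eq {α β : ℝ} (hα : Irrational α) (hβ : Irrational β) {n m : ℕ}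
    (h : ∀ k, 0 < k → cfDigit α (n + k) = cfDigit β (m + k)) :
    cfTail α (n + 1) = cfTail β (m + 1) :=
  eq_of_cfDigit_eq (irrational_cfTail hα _) (irrational_cfTail hβ _) fun k => by
    simpa only [cfDigit_cfTail, add_assoc, add_comm 1 k] using h (1 + k) (by omega)

section Psi

variable {α t : ℝ}

lemma psi2_nonneg : 0 ≤ psi2 α t :=
  Real.sInf_nonneg <| by rintro _ ⟨p, q, -, -, -, rfl⟩; exact abs_nonneg _

lemma psi2_le_approxErr {v : ℤ × ℤ} (hv₁ : 1 ≤ v.2) (hvt : (v.2 : ℝ) ≤ t)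
    (hv : ∀ n, v ≠ cfConv α n) : psi2 α t ≤ approxErr α v :=
  csInf_le ⟨0, by rintro _ ⟨p, q, -, -, -, rfl⟩; exact abs_nonneg _⟩
    ⟨v.1, v.2, hv₁, hvt, hv, rfl⟩

lemma le_psi2 (ht : 2 ≤ t) {b : ℝ}
    (hb : ∀ v : ℤ × ℤ, 1 ≤ v.2 → (v.2 : ℝ) ≤ t → (∀ n, v ≠ cfConv α n) → b ≤ approxErr α v) :
    b ≤ psi2 α t := by
  refine le_csInf ⟨_, 2 * cfNum α 0, 2 * cfDen α 0, ?_, ?_, two_smul_cfConv_ne 0, rfl⟩ ?_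
  · simp [cfDen]
  · simpa [cfDen] using ht
  · rintro _ ⟨p, q, hq, hqt, hpq, rfl⟩
    exact hb (p, q) hq hqt hpq

lemma psi2_le_two_mul_approxErr (hα : Irrational α) (k : ℕ) (ht : 2 * (cfDen α k : ℝ) ≤ t) :
    psi2 α t ≤ 2 * approxErr α (cfConv α k) := by
  have h := psi2_le_approxErr (t := t) (v := 2 • cfConv α k)
    (by simp [cfConv]; linarith [one_le_cfDen hα k]) (by simpa [cfConv] using ht)
    (two_smul_cfConv_ne k)
  simpa [approxErr, cfConv, mul_assoc, ← mul_sub, abs_mul] using h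

lemma tendsto_psi2 (hα : Irrational α) : Tendsto (psi2 α) atTop (𝓝 0) := by
  refine tendsto_order.2
    ⟨fun a ha => .of_forall fun t => ha.trans_le psi2_nonneg, fun ε hε => ?_⟩
  obtain ⟨k, hk⟩ := exists_nat_gt (2 / ε)
  filter_upwards [eventually_ge_atTop (2 * (cfDen α k : ℝ))] with t ht
  calc psi2 α t ≤ 2 * approxErr α (cfConv α k) := psi2_le_two_mul_approxErr hα k ht
    _ ≤ 2 * ((k : ℝ) + 1)⁻¹ := by gcongr; exact approxErr_cfConv_le_inv_succ hα
    _ < ε := by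
      rw [← div_eq_mul_inv, div_lt_iff₀ (by positivity)]
      rw [div_lt_iff₀ hε] at hk
      linarith

lemma frequently_mul_psi2_le (hα : Irrational α) : ∃ᶠ t in atTop, t * psi2 α t ≤ 4 := by
  refine frequently_atTop.2 fun b => ?_
  obtain ⟨k, hk⟩ := exists_nat_ge b
  have hkq : (k : ℝ) ≤ cfDen α k := by exact_mod_cast le_cfDen hα k
  have hq₀ := one_le_cast_cfDen hα k
  have hq₁ : (cfDen α k : ℝ) ≤ cfDen α (k + 1) := by exact_mod_cast cfDen_le_cfDen_succ hα k
  refine ⟨2 * cfDen α k, by linarith, ?_⟩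
  calc 2 * (cfDen α k : ℝ) * psi2 α (2 * cfDen α k)
      ≤ 2 * cfDen α k * (2 * (cfDen α (k + 1) : ℝ)⁻¹) := by
        gcongr
        exact (psi2_le_two_mul_approxErr hα k le_rfl).trans
          (by gcongr; exact approxErr_cfConv_le hα)
    _ = 4 * (cfDen α k / cfDen α (k + 1)) := by ring
    _ ≤ 4 := by linarith [div_le_one_of_le₀ hq₁ (by linarith)]

end Psi

lemma liminf_mul_le_liminf_mul {φ ψ : ℝ → ℝ} {κ c : ℝ} (hκ : 0 < κ) (hφ₀ : ∀ t, 0 ≤ φ t)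
    (hφ : Tendsto φ atTop (𝓝 0)) (hψ : IsCoboundedUnder (· ≥ ·) atTop fun t => t * ψ t)
    (h : ∀ᶠ t in atTop, φ (t / κ + c) ≤ κ * ψ t) :
    liminf (fun t => t * φ t) atTop ≤ liminf (fun t => t * ψ t) atTop := by
  set u : ℝ → ℝ := fun t => t / κ + c
  have hu : Tendsto u atTop atTop :=
    tendsto_atTop_add_const_right _ _ (tendsto_id.atTop_div_const hκ)
  have hbdd : IsBoundedUnder (· ≥ ·) atTop fun t => t * φ t :=
    ⟨0, eventually_map.2 <| (eventually_ge_atTop 0).mono fun t ht => mul_nonneg ht (hφ₀ t)⟩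
  refine le_of_forall_lt_imp_le_of_dense fun b hb => ?_
  obtain ⟨b', hbb', hb'⟩ := exists_between hb
  have h₁ : ∀ᶠ t in atTop, b' < u t * φ (u t) :=
    hu.eventually (eventually_lt_of_lt_liminf hb' hbdd)
  have h₂ : ∀ᶠ t in atTop, c * φ (u t) < b' - b :=
    ((hφ.comp hu).const_mul c).eventually_lt_const (by simpa using hbb')
  refine le_liminf_of_le hψ ?_
  filter_upwards [h, h₁, h₂, eventually_ge_atTop 0] with t h h₁ h₂ ht
  have key : κ * (u t * φ (u t) - c * φ (u t)) ≤ κ * (t * ψ t) := by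
    have e : κ * (u t * φ (u t) - c * φ (u t)) = t * φ (u t) := by
      simp only [u]; field_simp; ring
    rw [e]
    nlinarith
  linarith [le_of_mul_le_mul_left key hκ]

section Transfer

variable {α β : ℝ} {N M : ℕ} (hτ : cfTail α (N + 2) = cfTail β (M + 2))
include hτ

local notation "κ" => cfMobiusDen β M / cfMobiusDen α N

lemma smul_fromTail_eq_cfConv {s : ℤ} {w : ℤ × ℤ} {j : ℕ}
    (h : s • fromTail α N w = cfConv α (N + 2 + j)) :
    s • fromTail β M w = cfConv β (M + 2 + j) := by
  rw [← map_zsmul, ← fromTail_cfConv, hτ] at h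
  rw [← map_zsmul, ← fromTail_cfConv, fromTail_bijective.injective h]

variable (hα : Irrational α) (hβ : Irrational β)
include hα hβ

lemma approxErr_fromTail_eq (w : ℤ × ℤ) :
    approxErr α (fromTail α N w) = κ * approxErr β (fromTail β M w) := by
  have hα' := approxErr_fromTail_mul hα (n := N) w
  rw [hτ, ← approxErr_fromTail_mul hβ (n := M) w] at hα'
  rw [div_mul_eq_mul_div, eq_div_iff (cfMobiusDen_pos hα N).ne', hα', mul_comm]

lemma abs_fromTail_snd_le (w : ℤ × ℤ) (hw : approxErr β (fromTail β M w) ≤ 1) :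
    |((fromTail α N w).2 : ℝ)| ≤ |((fromTail β M w).2 : ℝ)| / κ +
      (cfDen β (M + 1) * cfMobiusDen α N + cfDen α (N + 1) * cfMobiusDen β M) := by
  set Dα := cfMobiusDen α N
  set Dβ := cfMobiusDen β M
  set e : ℝ := w.2 * cfTail β (M + 2) - w.1
  have hDα : 0 < Dα := cfMobiusDen_pos hα N
  have hDβ : 0 < Dβ := cfMobiusDen_pos hβ M
  have he : |e| ≤ Dβ := by
    rw [← approxErr, ← approxErr_fromTail_mul hβ]
    exact mul_le_of_le_one_left hDβ.le hw
  have hq : ((fromTail α N w).2 : ℝ) =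
      (fromTail β M w).2 * (Dα / Dβ) + e * (cfDen β (M + 1) * (Dα / Dβ) - cfDen α (N + 1)) := by
    rw [fromTail_snd, fromTail_snd, hτ]
    field_simp
    ring
  have hqα := one_le_cast_cfDen hα (N + 1)
  have hqβ := one_le_cast_cfDen hβ (M + 1)
  rw [hq, div_div_eq_mul_div, mul_div_assoc]
  refine (abs_add_le _ _).trans (add_le_add (by rw [abs_mul, abs_of_pos (div_pos hDα hDβ)]) ?_)
  calc |e * (cfDen β (M + 1) * (Dα / Dβ) - cfDen α (N + 1))|
      ≤ Dβ * (cfDen β (M + 1) * (Dα / Dβ) + cfDen α (N + 1)) := by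
        rw [abs_mul]
        gcongr
        exact (abs_sub _ _).trans (by rw [abs_of_pos (by positivity), abs_of_pos (by linarith)])
    _ = cfDen β (M + 1) * Dα + cfDen α (N + 1) * Dβ := by field_simp

lemma exists_approxErr_eq_mul (v : ℤ × ℤ) (hv₁ : 1 ≤ v.2) (hv : ∀ n, v ≠ cfConv β n)
    (hv₂ : approxErr β v ≤ 1)
    (hsmall : ∀ k < N + 2, κ * approxErr β v < approxErr α (cfConv α k)) :
    ∃ v' : ℤ × ℤ, 1 ≤ v'.2 ∧
      (v'.2 : ℝ) ≤ v.2 / κ +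
        (cfDen β (M + 1) * cfMobiusDen α N + cfDen α (N + 1) * cfMobiusDen β M) ∧
      (∀ n, v' ≠ cfConv α n) ∧ approxErr α v' = κ * approxErr β v := by
  obtain ⟨w, rfl⟩ := (fromTail_bijective (α := β) (n := M)).surjective v
  set v₀ := fromTail α N w
  have herr : approxErr α v₀ = _ := approxErr_fromTail_eq hτ hα hβ w
  have hv₀ : v₀.2 ≠ 0 := by
    refine snd_ne_zero_of_approxErr_lt_one ?_ <| herr ▸ (hsmall 0 (by omega)).trans_le ?_
    · intro h
      rw [← map_zero (fromTail α N), fromTail_bijective.injective.eq_iff] at h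
      simp [h] at hv₁
    · simpa using approxErr_cfConv_le_inv_succ hα (n := 0)
  refine ⟨v₀.2.sign • v₀, by simpa using Int.one_le_abs hv₀, ?_, fun n hn => ?_, ?_⟩
  · rw [Prod.smul_snd, smul_eq_mul, Int.sign_mul_self_eq_abs, Int.cast_abs,
      ← abs_of_pos (by exact_mod_cast hv₁ : (0 : ℝ) < (fromTail β M w).2)]
    exact abs_fromTail_snd_le hτ hα hβ w hv₂
  · -- convergents of index `≥ N + 2` come from convergents of the common tail
    by_cases hk : n < N + 2
    · have := hsmall n hk
      rw [← hn, approxErr_sign_smul hv₀, herr] at this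
      exact this.false
    obtain ⟨j, rfl⟩ := Nat.exists_eq_add_of_le (not_lt.mp hk)
    have hβj := smul_fromTail_eq_cfConv hτ hn
    rcases (abs_eq zero_le_one).mp (Int.abs_sign_of_ne_zero hv₀) with hs | hs <;>
      rw [hs] at hβj
    · exact hv _ (by simpa using hβj)
    · have := congrArg Prod.snd hβj
      simp only [cfConv, Prod.smul_snd, smul_eq_mul] at this
      linarith [one_le_cfDen hβ (M + 2 + j)]
  · rw [approxErr_sign_smul hv₀, herr]

lemma eventually_psi2_le :
    ∃ r > 0, ∃ c, ∀ᶠ t in atTop, psi2 α (t / r + c) ≤ r * psi2 β t := by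
  have hκ : 0 < κ := div_pos (cfMobiusDen_pos hβ M) (cfMobiusDen_pos hα N)
  set c := cfDen β (M + 1) * cfMobiusDen α N + cfDen α (N + 1) * cfMobiusDen β M
  obtain ⟨k₀, -, hk₀⟩ := (Finset.range (N + 2)).exists_min_image
    (fun k => approxErr α (cfConv α k)) ⟨0, by simp⟩
  set ε := min (approxErr α (cfConv α k₀)) κ
  have hε : 0 < ε := lt_min (approxErr_cfConv_pos hα) hκ
  have hu : Tendsto (fun t => t / κ + c) atTop atTop :=
    tendsto_atTop_add_const_right _ _ (tendsto_id.atTop_div_const hκ)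
  refine ⟨κ, hκ, c, ?_⟩
  filter_upwards [eventually_ge_atTop 2, (tendsto_psi2 hα).comp hu |>.eventually_lt_const hε]
    with t ht hψ
  rw [← div_le_iff₀' hκ]
  refine le_psi2 ht fun v hv₁ hvt hv => ?_
  rw [div_le_iff₀' hκ]
  by_cases hv₂ : ε ≤ κ * approxErr β v
  · exact (hψ.trans_le hv₂).le
  rw [not_le] at hv₂
  obtain ⟨v', hv'₁, hv't, hv', hv'err⟩ := exists_approxErr_eq_mul hτ hα hβ v hv₁ hv
    (by nlinarith [min_le_right (approxErr α (cfConv α k₀)) κ])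
    (fun k hk => hv₂.trans_le <| (min_le_left _ _).trans <| hk₀ k (Finset.mem_range.mpr hk))
  exact hv'err ▸ psi2_le_approxErr hv'₁ (hv't.trans (by gcongr)) hv'

end Transfer

lemma kConst_le_of_cfTail_eq {α β : ℝ} {N M : ℕ} (hτ : cfTail α (N + 2) = cfTail β (M + 2))
    (hα : Irrational α) (hβ : Irrational β) : kConst α ≤ kConst β :=
  let ⟨_, hκ, _, h⟩ := eventually_psi2_le hτ hα hβ
  liminf_mul_le_liminf_mul hκ (fun _ => psi2_nonneg) (tendsto_psi2 hα)
    (.of_frequently_le (frequently_mul_psi2_le hβ)) h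

/-- Equivalent irrational numbers have the same Diophantine constant `𝔨`. -/
theorem stmt_10 (α β : ℝ) (hα : Irrational α) (hβ : Irrational β)
    (h : CFEquiv α β) : kConst α = kConst β := by
  obtain ⟨n, m, hn, hm, h⟩ := h
  obtain ⟨N, rfl⟩ : ∃ N, n = N + 1 := ⟨n - 1, by omega⟩
  obtain ⟨M, rfl⟩ : ∃ M, m = M + 1 := ⟨m - 1, by omega⟩
  have hτ := cfTail_eq_of_cfDigit_eq hα hβ h
  exact le_antisymm (kConst_le_of_cfTail_eq hτ hα hβ) (kConst_le_of_cfTail_eq hτ.symm hβ hα)
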